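/- (Concavity inequality) Let A, B : [0,T) → ℝ be differentiable with A(t) > 0, B(t) ≥ 0, A'(t) ≥ 2αB(t) for some α > 2, and suppose (A'(t))² ≤ 4 A(t) B'(t) (Cauchy–Schwarz structure). Then d/dt [A^{−α/2}(t) B(t)] ≥ 0, i.e., A^{−α/2} B is nondecreasing on (0,T). -/

import Mathlib

/-!
With `p = -α/2`, the derivative of `A^p B` is `A^{p-1} (A B' - (α/2) A' B)`. The bracket is
nonnegative because `A' ≥ 2αB ≥ 0` gives `(α/2) A' B ≤ (A')²/4`, and Cauchy–Schwarz gives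
`(A')²/4 ≤ A B'`. A nonnegative derivative on an interval makes the function monotone there.
-/

open Real Set

theorem half_mul_mul_le_of_sq_le_four_mul {α a a' b b' : ℝ} (hα : 0 ≤ α) (hb : 0 ≤ b)
    (hab : 2 * α * b ≤ a') (hcs : a' ^ 2 ≤ 4 * a * b') : α / 2 * a' * b ≤ a * b' := by
  have ha' : 0 ≤ a' := le_trans (by positivity) hab
  nlinarith [mul_le_mul_of_nonneg_left hab ha']

theorem rpow_sub_one_mul_add_rpow_mul_nonneg {p a a' b b' : ℝ} (ha : 0 < a)
    (h : 0 ≤ p * a' * b + a * b') : 0 ≤ p * a ^ (p - 1) * a' * b + a ^ p * b' := by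
  have hsplit : a ^ p = a ^ (p - 1) * a := by
    rw [← rpow_add_one ha.ne', sub_add_cancel]
  calc (0 : ℝ) ≤ a ^ (p - 1) * (p * a' * b + a * b') := mul_nonneg (by positivity) h
    _ = p * a ^ (p - 1) * a' * b + a ^ p * b' := by rw [hsplit]; ring

theorem HasDerivAt.rpow_const_mul_of_ne_zero {f g : ℝ → ℝ} {f' g' x p : ℝ}
    (hf : HasDerivAt f f' x) (hg : HasDerivAt g g' x) (hx : f x ≠ 0) :
    HasDerivAt (fun y => f y ^ p * g y) (p * f x ^ (p - 1) * f' * g x + f x ^ p * g') x :=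
  ((hf.rpow_const (p := p) (Or.inl hx)).mul hg).congr_deriv (by ring)

theorem concavity_inequality_general (T α : ℝ) (hα : 2 < α)
    (A B A' B' : ℝ → ℝ)
    (hA : ∀ t ∈ Set.Ico (0 : ℝ) T, HasDerivAt A (A' t) t)
    (hB : ∀ t ∈ Set.Ico (0 : ℝ) T, HasDerivAt B (B' t) t)
    (hApos : ∀ t ∈ Set.Ico (0 : ℝ) T, 0 < A t)
    (hBnn : ∀ t ∈ Set.Ico (0 : ℝ) T, 0 ≤ B t)
    (hAB : ∀ t ∈ Set.Ico (0 : ℝ) T, 2 * α * B t ≤ A' t)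
    (hCS : ∀ t ∈ Set.Ico (0 : ℝ) T, (A' t) ^ 2 ≤ 4 * A t * B' t) :
    (∀ t ∈ Set.Ioo (0 : ℝ) T,
      0 ≤ -(α / 2) * A t ^ (-(α / 2) - 1) * A' t * B t + A t ^ (-(α / 2)) * B' t) ∧
    MonotoneOn (fun t => A t ^ (-(α / 2)) * B t) (Set.Ioo (0 : ℝ) T) := by
  have hderiv : ∀ t ∈ Ioo 0 T, HasDerivAt (fun t => A t ^ (-(α / 2)) * B t)
      (-(α / 2) * A t ^ (-(α / 2) - 1) * A' t * B t + A t ^ (-(α / 2)) * B' t) t := by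
    intro t ht
    replace ht := Ioo_subset_Ico_self ht
    exact (hA t ht).rpow_const_mul_of_ne_zero (hB t ht) (hApos t ht).ne'
  have hnonneg : ∀ t ∈ Ioo 0 T,
      0 ≤ -(α / 2) * A t ^ (-(α / 2) - 1) * A' t * B t + A t ^ (-(α / 2)) * B' t := by
    intro t ht
    replace ht := Ioo_subset_Ico_self ht
    have hbound := half_mul_mul_le_of_sq_le_four_mul (by linarith) (hBnn t ht) (hAB t ht)
      (hCS t ht)
    exact rpow_sub_one_mul_add_rpow_mul_nonneg (hApos t ht) (by linarith)
  refine ⟨hnonneg, monotoneOn_of_deriv_nonneg (convex_Ioo 0 T)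
    (fun t ht => (hderiv t ht).continuousAt.continuousWithinAt) ?_ ?_⟩ <;> rw [interior_Ioo]
  · exact fun t ht => (hderiv t ht).differentiableAt.differentiableWithinAt
  · exact fun t ht => (hderiv t ht).deriv ▸ hnonneg t ht

/-- Abstract concavity lemma: if `A > 0`, `B ≥ 0`, `A' ≥ 2αB` with `α > 2`, and
`(A')² ≤ 4AB'`, then `A^{−α/2} B` has nonnegative derivative, hence is nondecreasing. -/
theorem concavity_inequality (T α : ℝ) (hT : 0 < T) (hα : 2 < α)
    (A B A' B' : ℝ → ℝ)
    (hA : ∀ t ∈ Set.Ico (0 : ℝ) T, HasDerivAt A (A' t) t)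
    (hB : ∀ t ∈ Set.Ico (0 : ℝ) T, HasDerivAt B (B' t) t)
    (hApos : ∀ t ∈ Set.Ico (0 : ℝ) T, 0 < A t)
    (hBnn : ∀ t ∈ Set.Ico (0 : ℝ) T, 0 ≤ B t)
    (hAB : ∀ t ∈ Set.Ico (0 : ℝ) T, 2 * α * B t ≤ A' t)
    (hCS : ∀ t ∈ Set.Ico (0 : ℝ) T, (A' t) ^ 2 ≤ 4 * A t * B' t) :
    (∀ t ∈ Set.Ioo (0 : ℝ) T,
      0 ≤ -(α / 2) * A t ^ (-(α / 2) - 1) * A' t * B t + A t ^ (-(α / 2)) * B' t) ∧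
    MonotoneOn (fun t => A t ^ (-(α / 2)) * B t) (Set.Ioo (0 : ℝ) T) :=
  concavity_inequality_general T α hα A B A' B' hA hB hApos hBnn hAB hCS
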